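/- arXiv:2411.07000 — 2 statements merged into one kernel-verified Lean document; each statement's English description precedes it below -/
import Mathlib

section
/- Let G be a finite simple connected graph of order n ≥ 3 with maximum degree Δ(G). Then the distinguishing number of the subdivision graph of G satisfies D(S(G)) ≤ ⌈√(Δ(G))⌉. -/
open SimpleGraph

/-- The middle graph `M(G)`: vertices are `V(G) ⊕ E(G)`; two edges are adjacent
iff they are distinct and share an endpoint; a vertex and an edge are adjacent
iff the vertex is incident to the edge. -/
def middleGraph {V : Type*} (G : SimpleGraph V) : SimpleGraph (V ⊕ G.edgeSet) :=
  SimpleGraph.fromRel fun x y =>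
    match x, y with
    | Sum.inr e, Sum.inr f => e ≠ f ∧ ∃ v, v ∈ (e : Sym2 V) ∧ v ∈ (f : Sym2 V)
    | Sum.inl v, Sum.inr e => v ∈ (e : Sym2 V)
    | _, _ => False

/-- The subdivision graph `S(G)`: vertices are `V(G) ⊕ E(G)`; `v ∈ V(G)` and
`e ∈ E(G)` are adjacent iff `v` is incident to `e`. -/
def subdivisionGraph {V : Type*} (G : SimpleGraph V) : SimpleGraph (V ⊕ G.edgeSet) :=
  SimpleGraph.fromRel fun x y =>
    match x, y with
    | Sum.inl v, Sum.inr e => v ∈ (e : Sym2 V)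
    | _, _ => False

/-- The endline graph `G⁺`: to each vertex `v` of `G` (coded `Sum.inl v`) we attach a new
pendant vertex (coded `Sum.inr v`) via a new (endline) edge. -/
def endlineGraph {V : Type*} (G : SimpleGraph V) : SimpleGraph (V ⊕ V) :=
  SimpleGraph.fromRel fun x y =>
    match x, y with
    | Sum.inl u, Sum.inl v => G.Adj u v
    | Sum.inl v, Sum.inr u => v = u
    | _, _ => False

/-- A vertex coloring is distinguishing if the only automorphism preserving it is the identity. -/
def IsDistinguishingVertexColoring {V α : Type*} (G : SimpleGraph V) (c : V → α) : Prop :=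
  ∀ φ : G ≃g G, (∀ v, c (φ v) = c v) → ∀ v, φ v = v

/-- A proper vertex coloring assigns different colors to adjacent vertices. -/
def IsProperVertexColoring {V α : Type*} (G : SimpleGraph V) (c : V → α) : Prop :=
  ∀ u v, G.Adj u v → c u ≠ c v

/-- The distinguishing number `D(G)`. -/
noncomputable def distinguishingNumber {V : Type*} (G : SimpleGraph V) : ℕ :=
  sInf {r | ∃ c : V → Fin r, IsDistinguishingVertexColoring G c}

/-- The distinguishing chromatic number `χ_D(G)`. -/
noncomputable def distinguishingChromaticNumber {V : Type*} (G : SimpleGraph V) : ℕ :=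
  sInf {r | ∃ c : V → Fin r,
    IsProperVertexColoring G c ∧ IsDistinguishingVertexColoring G c}

/-- An edge coloring is distinguishing if the only automorphism preserving it is the identity. -/
def IsDistinguishingEdgeColoring {V α : Type*} (G : SimpleGraph V) (c : G.edgeSet → α) : Prop :=
  ∀ φ : G ≃g G, (∀ e, c (φ.mapEdgeSet e) = c e) → ∀ v, φ v = v

/-- A proper edge coloring assigns different colors to distinct edges sharing an endpoint. -/
def IsProperEdgeColoring {V α : Type*} (G : SimpleGraph V) (c : G.edgeSet → α) : Prop :=
  ∀ e f : G.edgeSet, e ≠ f → (∃ v, v ∈ (e : Sym2 V) ∧ v ∈ (f : Sym2 V)) → c e ≠ c f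

/-- The distinguishing index `D'(G)`. -/
noncomputable def distinguishingIndex {V : Type*} (G : SimpleGraph V) : ℕ :=
  sInf {r | ∃ c : G.edgeSet → Fin r, IsDistinguishingEdgeColoring G c}

/-- The distinguishing chromatic index `χ'_D(G)`. -/
noncomputable def distinguishingChromaticIndex {V : Type*} (G : SimpleGraph V) : ℕ :=
  sInf {r | ∃ c : G.edgeSet → Fin r,
    IsProperEdgeColoring G c ∧ IsDistinguishingEdgeColoring G c}

/-- The total distinguishing number `D''(G)`: the least `d` such that there is a (not
necessarily proper) coloring of vertices and edges with `d` colors preserved only by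
the identity automorphism. -/
noncomputable def totalDistinguishingNumber {V : Type*} (G : SimpleGraph V) : ℕ :=
  sInf {d | ∃ (cV : V → Fin d) (cE : G.edgeSet → Fin d),
    ∀ φ : G ≃g G,
      ((∀ v, cV (φ v) = cV v) ∧ (∀ e, cE (φ.mapEdgeSet e) = cE e)) → ∀ v, φ v = v}

/-!
Root a breadth-first search tree of `G` at a vertex `r` with a neighbour `z`, and let
`k = ⌈√Δ⌉`. Children of a vertex that have the same set of parents ("siblings") are fewer than
`Δ ≤ k²`, so they are told apart by the pair (colour of the child, colour of its edge to a chosen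
parent). One of the `k²` pairs is withheld so that `rz` is the only edge of colour `0` joining
vertices of colours `0` and `1`. An automorphism of `G` preserving these vertex and edge colours
therefore fixes `r` and `z`, hence all distances from `r`, and by induction on that distance it
fixes every vertex.

On `S(G)` this total colouring of `G` is a vertex colouring. An automorphism of `S(G)` either
preserves its two sides, and then comes from an automorphism of `G`, or swaps them; the latter
forces `G` to be a cycle, where colour `1` is used by one vertex but by at least two edges.
-/

open Finset Sum

lemma Nat.two_le_ceil_sqrt {n : ℕ} (hn : 2 ≤ n) : 2 ≤ ⌈√(n : ℝ)⌉₊ := by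
  have : ((1 : ℕ) : ℝ) < √n := by
    rw [Nat.cast_one, Real.lt_sqrt zero_le_one, one_pow]
    exact_mod_cast hn
  have := Nat.lt_ceil.2 this
  omega

lemma Nat.le_ceil_sqrt_mul_self (n : ℕ) : n ≤ ⌈√(n : ℝ)⌉₊ * ⌈√(n : ℝ)⌉₊ := by
  have h := (Real.sqrt_le_iff.1 (Nat.le_ceil √(n : ℝ))).2
  rw [sq] at h
  exact_mod_cast h

lemma Finset.card_filter_lt_lt_of_mem {α β : Type*} [LinearOrder β] (s : Finset α) (f : α → β)
    {x y : α} (hx : x ∈ s) (hxy : f x < f y) :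
    #{z ∈ s | f z < f x} < #{z ∈ s | f z < f y} := by
  refine card_lt_card ((ssubset_iff_of_subset fun z hz => ?_).2 ⟨x, ?_, ?_⟩)
  · simp only [mem_filter] at hz ⊢
    exact ⟨hz.1, hz.2.trans hxy⟩
  · simp [hx, hxy]
  · simp

lemma Finset.injOn_card_filter_lt {α β : Type*} [LinearOrder β] (s : Finset α) {f : α → β}
    (hf : Function.Injective f) : Set.InjOn (fun x => #{z ∈ s | f z < f x}) s := by
  intro x hx y hy h
  rcases lt_trichotomy (f x) (f y) with hxy | hxy | hxy
  · exact absurd h (s.card_filter_lt_lt_of_mem f hx hxy).ne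
  · exact hf hxy
  · exact absurd h (s.card_filter_lt_lt_of_mem f hy hxy).ne'

namespace SimpleGraph

lemma Connected.two_le_maxDegree {V : Type*} [Fintype V] {G : SimpleGraph V} [DecidableRel G.Adj]
    (hG : G.Connected) (hcard : 3 ≤ Fintype.card V) : 2 ≤ G.maxDegree := by
  by_contra! h
  have hsum : ∑ v, G.degree v ≤ Fintype.card V := by
    simpa using sum_le_card_nsmul univ (fun v => G.degree v) 1 fun v _ => by
      have := G.degree_le_maxDegree v
      omega
  have hedges := hG.card_vert_le_card_edgeSet_add_one
  rw [sum_degrees_eq_twice_card_edges] at hsum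
  rw [Nat.card_eq_fintype_card, Nat.card_eq_fintype_card, ← edgeFinset_card] at hedges
  omega

lemma Connected.dist_iso_apply {V : Type*} {G : SimpleGraph V} (hG : G.Connected) (ψ : G ≃g G)
    (a b : V) : G.dist (ψ a) (ψ b) = G.dist a b := by
  have key (ψ : G ≃g G) (a b : V) : G.dist (ψ a) (ψ b) ≤ G.dist a b := by
    obtain ⟨p, hp⟩ := hG.exists_walk_length_eq_dist a b
    exact (dist_le (p.map ψ.toHom)).trans (by simp [hp])
  refine (key ψ a b).antisymm ?_
  simpa using key ψ.symm (ψ a) (ψ b)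

end SimpleGraph

section Subdivision

variable {V : Type*} (G : SimpleGraph V)

@[simp]
lemma subdivisionGraph_adj_inl_inr {v : V} {e : G.edgeSet} :
    (subdivisionGraph G).Adj (inl v) (inr e) ↔ v ∈ (e : Sym2 V) := by
  simp [subdivisionGraph]

@[simp]
lemma subdivisionGraph_adj_inr_inl {v : V} {e : G.edgeSet} :
    (subdivisionGraph G).Adj (inr e) (inl v) ↔ v ∈ (e : Sym2 V) := by
  simp [subdivisionGraph]

@[simp]
lemma subdivisionGraph_not_adj_inl_inl {u v : V} :
    ¬(subdivisionGraph G).Adj (inl u) (inl v) := by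
  simp [subdivisionGraph]

@[simp]
lemma subdivisionGraph_not_adj_inr_inr {e f : G.edgeSet} :
    ¬(subdivisionGraph G).Adj (inr e) (inr f) := by
  simp [subdivisionGraph]

lemma isLeft_eq_not_of_subdivisionGraph_adj {x y : V ⊕ G.edgeSet}
    (h : (subdivisionGraph G).Adj x y) : x.isLeft = !y.isLeft := by
  cases x <;> cases y <;> simp_all

lemma adj_iff_exists_subdivisionGraph_adj {a b : V} :
    G.Adj a b ↔ a ≠ b ∧ ∃ x, (subdivisionGraph G).Adj (inl a) x ∧
      (subdivisionGraph G).Adj (inl b) x := by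
  refine ⟨fun h => ⟨h.ne, inr ⟨s(a, b), h⟩, by simp, by simp⟩, ?_⟩
  rintro ⟨hne, x | e, ha, hb⟩
  · simp at ha
  · rw [subdivisionGraph_adj_inl_inr] at ha hb
    simpa [(Sym2.mem_and_mem_iff hne).1 ⟨ha, hb⟩] using e.2

lemma card_neighborSet_subdivisionGraph_inl (v : V) [Fintype (G.neighborSet v)] :
    Nat.card ((subdivisionGraph G).neighborSet (inl v)) = G.degree v := by
  rw [← G.card_neighborSet_eq_degree, ← Nat.card_eq_fintype_card]
  refine (Nat.card_eq_of_bijective (fun w => ⟨inr ⟨s(v, w), w.2⟩, by simp⟩) ⟨?_, ?_⟩).symm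
  · intro w w' h
    have h' := congrArg Subtype.val (inr_injective (congrArg Subtype.val h))
    exact Subtype.ext (Sym2.congr_right.1 h')
  · rintro ⟨x | ⟨e, he⟩, hx⟩
    · simp at hx
    · have hv : v ∈ e := by simpa using hx
      refine ⟨⟨Sym2.Mem.other hv, ?_⟩, ?_⟩
      · rwa [mem_neighborSet, ← G.mem_edgeSet, Sym2.other_spec hv]
      · simp [Sym2.other_spec hv]

lemma card_neighborSet_subdivisionGraph_inr (e : G.edgeSet) :
    Nat.card ((subdivisionGraph G).neighborSet (inr e)) = 2 := by
  obtain ⟨e, he⟩ := e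
  induction e using Sym2.ind with
  | _ a b =>
    have hset : (subdivisionGraph G).neighborSet (inr ⟨s(a, b), he⟩) = {inl a, inl b} := by
      ext (x | f) <;> simp [eq_comm]
    rw [hset, Nat.card_coe_set_eq, Set.ncard_pair (by simpa using G.ne_of_adj he)]

variable {G}

lemma isLeft_apply_inl_eq_of_adj (φ : subdivisionGraph G ≃g subdivisionGraph G) {a b : V}
    (h : G.Adj a b) : (φ (inl a)).isLeft = (φ (inl b)).isLeft := by
  let e : G.edgeSet := ⟨s(a, b), h⟩
  have ha : (subdivisionGraph G).Adj (inl a) (inr e) := by simp [e]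
  have hb : (subdivisionGraph G).Adj (inl b) (inr e) := by simp [e]
  rw [isLeft_eq_not_of_subdivisionGraph_adj G (φ.map_adj_iff.2 ha),
    isLeft_eq_not_of_subdivisionGraph_adj G (φ.map_adj_iff.2 hb)]

lemma isLeft_apply_inl_eq (hG : G.Preconnected) (φ : subdivisionGraph G ≃g subdivisionGraph G)
    (a b : V) : (φ (inl a)).isLeft = (φ (inl b)).isLeft := by
  obtain ⟨p⟩ := hG a b
  induction p with
  | nil => rfl
  | cons h _ ih => exact (isLeft_apply_inl_eq_of_adj φ h).trans ih

lemma isLeft_apply_inr (φ : subdivisionGraph G ≃g subdivisionGraph G) (e : G.edgeSet) {v : V}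
    (hv : v ∈ (e : Sym2 V)) : (φ (inr e)).isLeft = !(φ (inl v)).isLeft := by
  have h := φ.map_adj_iff.2 ((subdivisionGraph_adj_inl_inr G).2 hv)
  rw [isLeft_eq_not_of_subdivisionGraph_adj G h, Bool.not_not]

lemma isLeft_apply_eq_or (hG : G.Connected) (φ : subdivisionGraph G ≃g subdivisionGraph G) :
    (∀ x, (φ x).isLeft = x.isLeft) ∨ ∀ x, (φ x).isLeft = !x.isLeft := by
  obtain ⟨v₀⟩ := hG.nonempty
  have hinl (v : V) := isLeft_apply_inl_eq hG.preconnected φ v v₀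
  have hinr (e : G.edgeSet) : (φ (inr e)).isLeft = !(φ (inl v₀)).isLeft := by
    rw [isLeft_apply_inr φ e (Sym2.out_fst_mem e.1), hinl]
  cases h : (φ (inl v₀)).isLeft
  · right; rintro (v | e) <;> simp [hinl, hinr, h]
  · left; rintro (v | e) <;> simp [hinl, hinr, h]

lemma exists_iso_of_isLeft_apply (φ : subdivisionGraph G ≃g subdivisionGraph G)
    (hside : ∀ x, (φ x).isLeft = x.isLeft) :
    ∃ ψ : G ≃g G, (∀ v, φ (inl v) = inl (ψ v)) ∧ ∀ e, φ (inr e) = inr (ψ.mapEdgeSet e) := by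
  choose π hπ using fun v => Sum.isLeft_iff.1 (hside (inl v))
  have hπ_bij : Function.Bijective π := by
    refine ⟨fun a b h => inl_injective (φ.injective ((hπ a).trans (h ▸ (hπ b).symm))), fun w => ?_⟩
    obtain ⟨v, hv⟩ := Sum.isLeft_iff.1 ((hside (φ.symm (inl w))).symm.trans (by simp))
    refine ⟨v, inl_injective (β := G.edgeSet) ?_⟩
    rw [← hπ, ← hv, φ.apply_symm_apply]
  let ψ : G ≃g G :=
    { Equiv.ofBijective π hπ_bij with
      map_rel_iff' := fun {a b} => by
        show G.Adj (π a) (π b) ↔ G.Adj a b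
        rw [adj_iff_exists_subdivisionGraph_adj G, adj_iff_exists_subdivisionGraph_adj G, ← hπ,
          ← hπ, φ.surjective.exists, hπ_bij.injective.ne_iff]
        simp only [φ.map_adj_iff] }
  refine ⟨ψ, hπ, fun ⟨e, he⟩ => ?_⟩
  obtain ⟨f, hf⟩ := Sum.isRight_iff.1 (by simpa using hside (inr ⟨e, he⟩))
  rw [hf]
  congr 1
  induction e using Sym2.ind with
  | _ a b =>
    have hmem (x : V) (hx : x ∈ s(a, b)) : ψ x ∈ (f : Sym2 V) := by
      have := φ.map_adj_iff.2 ((subdivisionGraph_adj_inl_inr G (e := ⟨s(a, b), he⟩)).2 hx)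
      rwa [hπ, hf, subdivisionGraph_adj_inl_inr] at this
    have hf_eq := (Sym2.mem_and_mem_iff (ψ.injective.ne (G.ne_of_adj he))).1
      ⟨hmem a (by simp), hmem b (by simp)⟩
    apply Subtype.ext
    simpa [Iso.mapEdgeSet, Hom.mapEdgeSet] using hf_eq

lemma degree_eq_two_of_isLeft_apply_eq_not [Fintype V] [DecidableRel G.Adj]
    (φ : subdivisionGraph G ≃g subdivisionGraph G) (hswap : ∀ x, (φ x).isLeft = !x.isLeft)
    (v : V) : G.degree v = 2 := by
  obtain ⟨e, he⟩ := Sum.isRight_iff.1 (by simpa using hswap (inl v))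
  rw [← card_neighborSet_subdivisionGraph_inl, ← card_neighborSet_subdivisionGraph_inr G e, ← he]
  exact Nat.card_congr (φ.mapNeighborSet _)

end Subdivision

def IsDistinguishingTotalColoring {V α : Type*} (G : SimpleGraph V) (cV : V → α)
    (cE : G.edgeSet → α) : Prop :=
  ∀ ψ : G ≃g G, (∀ v, cV (ψ v) = cV v) → (∀ e, cE (ψ.mapEdgeSet e) = cE e) → ∀ v, ψ v = v

lemma IsDistinguishingVertexColoring.of_comp {V α β : Type*} {G : SimpleGraph V} {c : V → α}
    (f : α → β) (h : IsDistinguishingVertexColoring G (f ∘ c)) :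
    IsDistinguishingVertexColoring G c :=
  fun φ hφ => h φ fun v => congrArg f (hφ v)

theorem IsDistinguishingTotalColoring.isDistinguishingVertexColoring_subdivisionGraph
    {V α : Type*} [Fintype V] {G : SimpleGraph V} [DecidableRel G.Adj] (hG : G.Connected)
    {cV : V → α} {cE : G.edgeSet → α} (h : IsDistinguishingTotalColoring G cV cE)
    (hcycle : G.IsRegularOfDegree 2 →
      ∃ a, {v | cV v = a}.Subsingleton ∧ ∃ e₁ e₂, e₁ ≠ e₂ ∧ cE e₁ = a ∧ cE e₂ = a) :
    IsDistinguishingVertexColoring (subdivisionGraph G) (Sum.elim cV cE) := by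
  intro φ hφ
  rcases isLeft_apply_eq_or hG φ with hside | hswap
  · obtain ⟨ψ, hψV, hψE⟩ := exists_iso_of_isLeft_apply φ hside
    have hψ : ⇑ψ = id := funext <|
      h ψ (fun v => by simpa [hψV] using hφ (inl v)) fun e => by simpa [hψE] using hφ (inr e)
    rintro (v | ⟨e, he⟩)
    · simp [hψV, hψ]
    · simp [hψE, hψ, Iso.mapEdgeSet, Hom.mapEdgeSet]
  · obtain ⟨a, hV, e₁, e₂, hne, h₁, h₂⟩ := hcycle (degree_eq_two_of_isLeft_apply_eq_not φ hswap)
    obtain ⟨x₁, hx₁⟩ := Sum.isLeft_iff.1 (by simpa using hswap (inr e₁))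
    obtain ⟨x₂, hx₂⟩ := Sum.isLeft_iff.1 (by simpa using hswap (inr e₂))
    have hx : x₁ = x₂ :=
      hV (by simpa [hx₁, h₁] using hφ (inr e₁)) (by simpa [hx₂, h₂] using hφ (inr e₂))
    exact absurd (inr_injective (φ.injective (hx₁.trans (hx ▸ hx₂.symm)))) hne

/-- Colours (of a vertex, of the edge to its parent) for sibling index `i` under a parent of
colour `s`. The first `k (k - 1)` indices get a nonzero edge colour; the last `k - 1` get edge
colour `0` and avoid vertex colour `1` if `s = 0`, and `0` otherwise, so that such an edge of
colour `0` never joins vertices of colours `0` and `1`. -/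
def indexColors (k i s : ℕ) : ℕ × ℕ :=
  if i < k * (k - 1) then (i / (k - 1), i % (k - 1) + 1)
  else if s = 0 ∧ (i - k * (k - 1)) % (k - 1) = 0 then (0, 0)
  else ((i - k * (k - 1)) % (k - 1) + 1, 0)

section IndexColors

variable {k i i' s : ℕ}

lemma indexColors_fst_lt (hk : 2 ≤ k) : (indexColors k i s).1 < k := by
  have := Nat.mod_lt (i - k * (k - 1)) (show 0 < k - 1 by omega)
  unfold indexColors
  split_ifs with h
  · exact Nat.div_lt_of_lt_mul (by rwa [Nat.mul_comm] at h)
  all_goals omega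

lemma indexColors_snd_lt (hk : 2 ≤ k) : (indexColors k i s).2 < k := by
  have := Nat.mod_lt i (show 0 < k - 1 by omega)
  unfold indexColors
  split_ifs <;> omega

lemma indexColors_zero_left (hk : 2 ≤ k) : indexColors k 0 s = (0, 1) := by
  have : 0 < k * (k - 1) := Nat.mul_pos (by omega) (by omega)
  simp [indexColors, this]

lemma indexColors_fst_ne_one (h : (indexColors k i 0).2 = 0) : (indexColors k i 0).1 ≠ 1 := by
  unfold indexColors at h ⊢
  split_ifs at h ⊢ <;> omega

lemma indexColors_fst_ne_zero (hs : s ≠ 0) (h : (indexColors k i s).2 = 0) :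
    (indexColors k i s).1 ≠ 0 := by
  unfold indexColors at h ⊢
  split_ifs at h ⊢ <;> omega

lemma indexColors_injective (hk : 2 ≤ k) (hi : i < k * k - 1) (hi' : i' < k * k - 1)
    (h : indexColors k i s = indexColors k i' s) : i = i' := by
  have hkk : k * (k - 1) + (k - 1) = k * k - 1 := by
    have : 1 ≤ k * k := Nat.one_le_iff_ne_zero.2 (by positivity)
    zify [this, (by omega : 1 ≤ k)]
    ring
  have hmod {n : ℕ} (hn : n < k * k - 1) :
      (n - k * (k - 1)) % (k - 1) = n - k * (k - 1) :=
    Nat.mod_eq_of_lt (by omega)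
  unfold indexColors at h
  rw [hmod hi, hmod hi'] at h
  by_cases h₁ : i < k * (k - 1) <;> by_cases h₂ : i' < k * (k - 1)
  · simp only [h₁, h₂, if_true, Prod.mk.injEq] at h
    rw [← Nat.div_add_mod i (k - 1), ← Nat.div_add_mod i' (k - 1), h.1, Nat.add_right_cancel h.2]
  all_goals split_ifs at h <;> simp only [Prod.mk.injEq] at h <;> omega

end IndexColors

namespace SimpleGraph

section BFS

variable {V : Type*} [Fintype V] (G : SimpleGraph V) [DecidableRel G.Adj] (r z : V)

noncomputable def parents (w : V) : Finset V := {u | G.Adj u w ∧ G.dist r u + 1 = G.dist r w}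

noncomputable def parent (w : V) : V := if h : (G.parents r w).Nonempty then h.choose else r

variable {G r z}

lemma mem_parents {u w : V} : u ∈ G.parents r w ↔ G.Adj u w ∧ G.dist r u + 1 = G.dist r w := by
  simp [parents]

lemma parents_self : G.parents r r = ∅ := by
  ext u
  simp [mem_parents]

lemma parents_nonempty (hG : G.Connected) {w : V} (hw : w ≠ r) : (G.parents r w).Nonempty := by
  obtain ⟨p, hp⟩ := hG.exists_walk_length_eq_dist w r
  cases p with
  | nil => exact absurd rfl hw
  | @cons _ u _ h q =>
    refine ⟨u, mem_parents.2 ⟨h.symm, ?_⟩⟩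
    have hq : G.dist u r ≤ q.length := dist_le q
    have := h.symm.diff_dist_adj (u := r)
    rw [Walk.length_cons, dist_comm] at hp
    rw [dist_comm] at hq
    omega

lemma parent_mem_parents {w : V} (h : (G.parents r w).Nonempty) :
    G.parent r w ∈ G.parents r w := by
  rw [parent, dif_pos h]
  exact h.choose_spec

lemma dist_parent_lt {w : V} (h : (G.parents r w).Nonempty) :
    G.dist r (G.parent r w) < G.dist r w := by
  have := (mem_parents.1 (parent_mem_parents h)).2
  omega

lemma parent_congr {w w' : V} (h : G.parents r w = G.parents r w') :
    G.parent r w = G.parent r w' := by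
  simp only [parent, h]

lemma parent_of_adj (hG : G.Connected) (hrz : G.Adj r z) : G.parent r z = r := by
  have h := (mem_parents.1 (parent_mem_parents (parents_nonempty hG hrz.ne'))).2
  rw [dist_eq_one_iff_adj.2 hrz, Nat.add_eq_right, hG.dist_eq_zero_iff] at h
  exact h.symm

variable (G r z) [DecidableEq V]

noncomputable def siblings (w : V) : Finset V := {x | G.parents r x = G.parents r w ∧ x ≠ z}

noncomputable def siblingIndex (w : V) : ℕ :=
  #{x ∈ G.siblings r z w | Fintype.equivFin V x < Fintype.equivFin V w}

variable {G r z}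

lemma parents_iso_apply (hG : G.Connected) (ψ : G ≃g G) (hr : ψ r = r) (w : V) :
    G.parents r (ψ w) = (G.parents r w).image ψ := by
  ext u
  obtain ⟨u, rfl⟩ := ψ.surjective u
  have hdist (x : V) : G.dist r (ψ x) = G.dist r x := by simpa [hr] using hG.dist_iso_apply ψ r x
  rw [ψ.injective.mem_finset_image, mem_parents, mem_parents, ψ.map_adj_iff, hdist, hdist]

lemma mem_siblings {x w : V} :
    x ∈ G.siblings r z w ↔ G.parents r x = G.parents r w ∧ x ≠ z := by
  simp [siblings]

lemma siblings_congr {x w : V} (h : x ∈ G.siblings r z w) :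
    G.siblings r z x = G.siblings r z w := by
  ext y
  simp [mem_siblings, (mem_siblings.1 h).1]

lemma siblingIndex_lt_card {w : V} (hw : w ≠ z) : G.siblingIndex r z w < #(G.siblings r z w) :=
  card_lt_card (filter_ssubset.2 ⟨w, mem_siblings.2 ⟨rfl, hw⟩, lt_irrefl _⟩)

lemma siblingIndex_injOn {w : V} :
    Set.InjOn (G.siblingIndex r z) (G.siblings r z w) := by
  intro x hx y hy h
  rw [siblingIndex, siblingIndex, siblings_congr hx, siblings_congr hy] at h
  exact (G.siblings r z w).injOn_card_filter_lt (Fintype.equivFin V).injective hx hy h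

lemma exists_card_siblings_lt_degree (hG : G.Connected) (hrz : G.Adj r z) {w : V} (hw : w ≠ r) :
    ∃ q, #(G.siblings r z w) < G.degree q := by
  have hp := parent_mem_parents (parents_nonempty hG hw)
  generalize G.parent r w = p at hp
  have hadj : ∀ x ∈ G.siblings r z w, G.Adj p x := fun x hx =>
    (mem_parents.1 ((mem_siblings.1 hx).1 ▸ hp)).1
  obtain ⟨y, hpy, hy⟩ : ∃ y, G.Adj p y ∧ y ∉ G.siblings r z w := by
    by_cases hpr : p = r
    · exact ⟨z, hpr ▸ hrz, fun h => (mem_siblings.1 h).2 rfl⟩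
    · have hq := mem_parents.1 (parent_mem_parents (parents_nonempty hG hpr))
      refine ⟨G.parent r p, hq.1.symm, fun h => ?_⟩
      have := (mem_parents.1 ((mem_siblings.1 h).1 ▸ hp)).2
      omega
  refine ⟨p, ?_⟩
  rw [← card_neighborFinset_eq_degree]
  calc #(G.siblings r z w) < #(insert y (G.siblings r z w)) := card_lt_card (ssubset_insert hy)
    _ ≤ #(G.neighborFinset p) := card_le_card <| insert_subset
        ((mem_neighborFinset _ _ _).2 hpy) fun x hx => (mem_neighborFinset _ _ _).2 (hadj x hx)

end BFS

section Coloring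

variable {V : Type*} [Fintype V] [DecidableEq V] (G : SimpleGraph V) [DecidableRel G.Adj]
  (r z : V) (k : ℕ)

/-- The colour of `w` and the colour of the edge from `w` to its chosen parent. -/
noncomputable def signature (w : V) : ℕ × ℕ :=
  if _ : (G.parents r w).Nonempty then
    if w = z then (1, 0)
    else indexColors k (G.siblingIndex r z w) (signature (G.parent r w)).1
  else (0, 0)
termination_by G.dist r w
decreasing_by exact dist_parent_lt ‹_›

noncomputable def vertexColor (w : V) : ℕ := (G.signature r z k w).1

noncomputable def edgeColor : Sym2 V → ℕ :=
  Sym2.lift ⟨fun u w =>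
    if (G.parents r w).Nonempty ∧ u = G.parent r w then (G.signature r z k w).2
    else if (G.parents r u).Nonempty ∧ w = G.parent r u then (G.signature r z k u).2
    else 1, fun u w => by
      dsimp only
      split_ifs with h₁ h₂ h₂ <;> try rfl
      have := dist_parent_lt h₁.1
      have := dist_parent_lt h₂.1
      rw [← h₁.2, ← h₂.2] at *
      omega⟩

variable {G r z k}

lemma signature_root : G.signature r z k r = (0, 0) := by
  rw [signature, dif_neg (by simp [parents_self])]

lemma signature_of_adj (hG : G.Connected) (hrz : G.Adj r z) : G.signature r z k z = (1, 0) := by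
  rw [signature, dif_pos (parents_nonempty hG hrz.ne'), if_pos rfl]

lemma signature_of_ne {w : V} (h : (G.parents r w).Nonempty) (hwz : w ≠ z) :
    G.signature r z k w =
      indexColors k (G.siblingIndex r z w) (G.vertexColor r z k (G.parent r w)) := by
  rw [signature, dif_pos h, if_neg hwz, vertexColor]

lemma vertexColor_lt (hk : 2 ≤ k) (w : V) : G.vertexColor r z k w < k := by
  rw [vertexColor, signature]
  split_ifs
  · omega
  · exact indexColors_fst_lt hk
  · omega

lemma signature_snd_lt (hk : 2 ≤ k) (w : V) : (G.signature r z k w).2 < k := by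
  rw [signature]
  split_ifs
  · omega
  · exact indexColors_snd_lt hk
  · omega

lemma edgeColor_mk (u w : V) : G.edgeColor r z k s(u, w) =
    if (G.parents r w).Nonempty ∧ u = G.parent r w then (G.signature r z k w).2
    else if (G.parents r u).Nonempty ∧ w = G.parent r u then (G.signature r z k u).2
    else 1 := rfl

lemma edgeColor_lt (hk : 2 ≤ k) (e : Sym2 V) : G.edgeColor r z k e < k := by
  induction e using Sym2.ind with
  | _ u w =>
    rw [edgeColor_mk]
    split_ifs
    · exact signature_snd_lt hk w
    · exact signature_snd_lt hk u
    · omega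

lemma edgeColor_parent {w : V} (h : (G.parents r w).Nonempty) :
    G.edgeColor r z k s(G.parent r w, w) = (G.signature r z k w).2 := by
  rw [edgeColor_mk, if_pos ⟨h, rfl⟩]

lemma edgeColor_of_adj (hG : G.Connected) (hrz : G.Adj r z) : G.edgeColor r z k s(r, z) = 0 := by
  have h := edgeColor_parent (k := k) (z := z) (parents_nonempty hG hrz.ne')
  rwa [parent_of_adj hG hrz, signature_of_adj hG hrz] at h

lemma edgeColor_eq_one_or (e : Sym2 V) : G.edgeColor r z k e = 1 ∨
    ∃ w, (G.parents r w).Nonempty ∧ e = s(G.parent r w, w) ∧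
      G.edgeColor r z k e = (G.signature r z k w).2 := by
  induction e using Sym2.ind with
  | _ u w =>
    rw [edgeColor_mk]
    split_ifs with h₁ h₂
    · exact .inr ⟨w, h₁.1, by rw [h₁.2], rfl⟩
    · exact .inr ⟨u, h₂.1, by rw [h₂.2, Sym2.eq_swap], rfl⟩
    · exact .inl rfl

lemma eq_and_eq_of_edgeColor_eq_zero (hG : G.Connected) (hrz : G.Adj r z) {a b : V}
    (h : G.edgeColor r z k s(a, b) = 0) (ha : G.vertexColor r z k a = 0)
    (hb : G.vertexColor r z k b = 1) : a = r ∧ b = z := by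
  obtain h1 | ⟨w, hw, hab, hcol⟩ := G.edgeColor_eq_one_or (r := r) (z := z) (k := k) s(a, b)
  · omega
  rw [h] at hcol
  rcases Sym2.eq_iff.1 hab with ⟨rfl, rfl⟩ | ⟨rfl, rfl⟩
  · by_cases hbz : b = z
    · exact ⟨hbz ▸ parent_of_adj hG hrz, hbz⟩
    · rw [vertexColor, signature_of_ne hw hbz, ha] at hb
      rw [signature_of_ne hw hbz, ha] at hcol
      exact absurd hb (indexColors_fst_ne_one hcol.symm)
  · have haz : a ≠ z := by
      rintro rfl
      simp [vertexColor, signature_of_adj hG hrz] at ha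
    rw [vertexColor, signature_of_ne hw haz, hb] at ha
    rw [signature_of_ne hw haz, hb] at hcol
    exact absurd ha (indexColors_fst_ne_zero one_ne_zero hcol.symm)

lemma eq_of_mem_siblings_of_signature_eq (hG : G.Connected) (hrz : G.Adj r z) (hk : 2 ≤ k)
    (hmax : G.maxDegree ≤ k * k) {w w' : V} (hw : w ≠ r) (hwz : w ≠ z)
    (hw' : w' ∈ G.siblings r z w) (h : G.signature r z k w' = G.signature r z k w) : w' = w := by
  obtain ⟨hpar, hw'z⟩ := mem_siblings.1 hw'
  have hne := parents_nonempty hG hw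
  rw [signature_of_ne (hpar ▸ hne) hw'z, signature_of_ne hne hwz, parent_congr hpar] at h
  obtain ⟨q, hq⟩ := exists_card_siblings_lt_degree hG hrz hw
  have hcard := hq.trans_le ((G.degree_le_maxDegree q).trans hmax)
  have hi := siblingIndex_lt_card (G := G) (r := r) hwz
  have hi' := siblings_congr hw' ▸ siblingIndex_lt_card (G := G) (r := r) hw'z
  exact siblingIndex_injOn hw' (mem_siblings.2 ⟨rfl, hwz⟩)
    (indexColors_injective hk (by omega) (by omega) h)

lemma signature_iso_apply (ψ : G ≃g G)
    (hV : ∀ v, G.vertexColor r z k (ψ v) = G.vertexColor r z k v)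
    (hE : ∀ a b, G.Adj a b → G.edgeColor r z k s(ψ a, ψ b) = G.edgeColor r z k s(a, b))
    {w : V} (hw : (G.parents r w).Nonempty) (hpar : G.parents r (ψ w) = G.parents r w)
    (hfix : ψ (G.parent r w) = G.parent r w) :
    G.signature r z k (ψ w) = G.signature r z k w := by
  refine Prod.ext (hV w) ?_
  rw [← edgeColor_parent hw, ← edgeColor_parent (hpar ▸ hw), parent_congr hpar,
    ← hE _ _ (mem_parents.1 (parent_mem_parents hw)).1, hfix]

theorem isDistinguishingTotalColoring_edgeColor (hG : G.Connected) (hrz : G.Adj r z)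
    (hk : 2 ≤ k) (hmax : G.maxDegree ≤ k * k) :
    IsDistinguishingTotalColoring G (G.vertexColor r z k) fun e => G.edgeColor r z k e := by
  intro ψ hV hE
  replace hE (a b : V) (h : G.Adj a b) :
      G.edgeColor r z k s(ψ a, ψ b) = G.edgeColor r z k s(a, b) := hE ⟨s(a, b), h⟩
  obtain ⟨hr, hz⟩ : ψ r = r ∧ ψ z = z := by
    refine eq_and_eq_of_edgeColor_eq_zero (k := k) hG hrz ?_ ?_ ?_
    · rw [hE r z hrz, edgeColor_of_adj hG hrz]
    · rw [hV, vertexColor, signature_root]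
    · rw [hV, vertexColor, signature_of_adj hG hrz]
  intro w
  induction hn : G.dist r w using Nat.strong_induction_on generalizing w with
  | _ n ih =>
  obtain rfl | hwr := eq_or_ne w r
  · exact hr
  obtain rfl | hwz := eq_or_ne w z
  · exact hz
  have hne := parents_nonempty hG hwr
  have hfix (u : V) (hu : u ∈ G.parents r w) : ψ u = u :=
    ih _ (by have := (mem_parents.1 hu).2; omega) u rfl
  have hpar : G.parents r (ψ w) = G.parents r w := by
    rw [parents_iso_apply hG ψ hr, image_congr hfix, image_id']
  refine eq_of_mem_siblings_of_signature_eq hG hrz hk hmax hwr hwz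
    (mem_siblings.2 ⟨hpar, fun h => hwz (ψ.injective (h.trans hz.symm))⟩)
    (signature_iso_apply ψ hV hE hne hpar (hfix _ (parent_mem_parents hne)))

lemma signature_of_isRegularOfDegree_two (hG : G.Connected) (hrz : G.Adj r z) (hk : 2 ≤ k)
    (h2 : G.IsRegularOfDegree 2) {w : V} (hw : w ≠ r) (hwz : w ≠ z) :
    G.signature r z k w = (0, 1) := by
  have hsib : G.siblingIndex r z w = 0 := by
    obtain ⟨q, hq⟩ := exists_card_siblings_lt_degree hG hrz hw
    have := siblingIndex_lt_card (G := G) (r := r) hwz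
    rw [h2.degree_eq] at hq
    omega
  rw [signature_of_ne (parents_nonempty hG hw) hwz, hsib, indexColors_zero_left hk]

lemma vertexColor_eq_one_iff (hG : G.Connected) (hrz : G.Adj r z) (hk : 2 ≤ k)
    (h2 : G.IsRegularOfDegree 2) {v : V} : G.vertexColor r z k v = 1 ↔ v = z := by
  refine ⟨fun h => ?_, fun h => by rw [h, vertexColor, signature_of_adj hG hrz]⟩
  by_contra hvz
  obtain rfl | hvr := eq_or_ne v r
  · simp [vertexColor, signature_root] at h
  · simp [vertexColor, signature_of_isRegularOfDegree_two hG hrz hk h2 hvr hvz] at h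

lemma edgeColor_eq_one (hG : G.Connected) (hrz : G.Adj r z) (hk : 2 ≤ k)
    (h2 : G.IsRegularOfDegree 2) {e : Sym2 V} (he : e ≠ s(r, z)) : G.edgeColor r z k e = 1 := by
  obtain h | ⟨w, hw, rfl, hcol⟩ := G.edgeColor_eq_one_or (r := r) (z := z) (k := k) e
  · exact h
  have hwr : w ≠ r := by
    rintro rfl
    simp [parents_self] at hw
  have hwz : w ≠ z := by
    rintro rfl
    exact he (by rw [parent_of_adj hG hrz])
  rw [hcol, signature_of_isRegularOfDegree_two hG hrz hk h2 hwr hwz]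

lemma exists_ne_edgeColor_eq_one (hG : G.Connected) (hrz : G.Adj r z) (hk : 2 ≤ k)
    (h2 : G.IsRegularOfDegree 2) :
    ∃ e₁ e₂ : G.edgeSet, e₁ ≠ e₂ ∧ G.edgeColor r z k e₁ = 1 ∧ G.edgeColor r z k e₂ = 1 := by
  have hcard (v : V) : 1 < #(G.neighborFinset v) := by
    rw [card_neighborFinset_eq_degree, h2.degree_eq]
    norm_num
  obtain ⟨y, hy, hyr⟩ := exists_mem_ne (hcard z) r
  obtain ⟨y', hy', hy'z⟩ := exists_mem_ne (hcard r) z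
  rw [mem_neighborFinset] at hy hy'
  refine ⟨⟨s(z, y), hy⟩, ⟨s(r, y'), hy'⟩, ?_, edgeColor_eq_one hG hrz hk h2 ?_,
    edgeColor_eq_one hG hrz hk h2 ?_⟩
  · simp [Subtype.ext_iff, hrz.ne', hy'z.symm]
  · simp [hyr, hrz.ne']
  · simp [hy'z, hrz.ne]

theorem isDistinguishingVertexColoring_subdivisionGraph_elim (hG : G.Connected)
    (hrz : G.Adj r z) (hk : 2 ≤ k) (hmax : G.maxDegree ≤ k * k) :
    IsDistinguishingVertexColoring (subdivisionGraph G)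
      (Sum.elim (G.vertexColor r z k) fun e => G.edgeColor r z k e) := by
  have h := isDistinguishingTotalColoring_edgeColor hG hrz hk hmax
  refine h.isDistinguishingVertexColoring_subdivisionGraph hG fun h2 => ⟨1, ?_, ?_⟩
  · exact fun v hv w hw => ((vertexColor_eq_one_iff hG hrz hk h2).1 hv).trans
      ((vertexColor_eq_one_iff hG hrz hk h2).1 hw).symm
  · exact exists_ne_edgeColor_eq_one hG hrz hk h2

end Coloring

end SimpleGraph

/-- For a finite simple connected graph `G` of order `≥ 3`,
`D(S(G)) ≤ ⌈√(Δ(G))⌉`. -/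
theorem distinguishingNumber_subdivision_le_ceil_sqrt_maxDegree
    {V : Type*} [Fintype V] [DecidableEq V] (G : SimpleGraph V) [DecidableRel G.Adj]
    (hconn : G.Connected) (hcard : 3 ≤ Fintype.card V) :
    distinguishingNumber (subdivisionGraph G) ≤ ⌈Real.sqrt (G.maxDegree : ℝ)⌉₊ := by
  set k := ⌈Real.sqrt (G.maxDegree : ℝ)⌉₊
  have hΔ := hconn.two_le_maxDegree hcard
  have hk : 2 ≤ k := Nat.two_le_ceil_sqrt hΔ
  have := hconn.nonempty
  obtain ⟨r, hr⟩ := G.exists_maximal_degree_vertex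
  obtain ⟨z, hrz⟩ := (G.degree_pos_iff_exists_adj r).1 (by omega)
  refine Nat.sInf_le ⟨Sum.elim (fun v => ⟨G.vertexColor r z k v, vertexColor_lt hk v⟩)
    fun e => ⟨G.edgeColor r z k e, edgeColor_lt hk e.1⟩, .of_comp Fin.val ?_⟩
  rw [Sum.comp_elim]
  exact isDistinguishingVertexColoring_subdivisionGraph_elim hconn hrz hk
    (Nat.le_ceil_sqrt_mul_self _)
end

section
/- Let H be a finite simple connected graph that is not isomorphic to a cycle Cₙ for any n. Then every automorphism φ of the subdivision graph S(H) satisfies φ(V(H)) = V(H) and φ(V(S(H)) \ V(H)) = V(S(H)) \ V(H); that is, φ maps original vertices of H to original vertices and subdivision vertices to subdivision vertices. -/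
/-!
The subdivision graph `S(H)` is connected and bipartite with parts `V(H)` and `E(H)`, so an
automorphism of `S(H)` either preserves both parts or swaps them. A swap would send every vertex
of `H`, whose degree in `S(H)` is its degree in `H`, to a subdivision vertex, which has degree 2.
Then `H` is connected and 2-regular, hence a cycle: it has a cycle through all of its vertices,
and the resulting copy of `Cₙ` in `H` is bijective and cannot miss an edge, since both graphs are
2-regular.
-/

open SimpleGraph

open Function

namespace SimpleGraph

variable {V W : Type*}

section

variable {G : SimpleGraph V} {G' : SimpleGraph W}

theorem Preconnected.apply_eq_of_forall_adj {α : Type*} (hG : G.Preconnected) {f : V → α}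
    (hf : ∀ ⦃x y⦄, G.Adj x y → f x = f y) (x y : V) : f x = f y := by
  obtain ⟨p⟩ := hG x y
  induction p with
  | nil => rfl
  | cons h _ ih => exact (hf h).trans ih

theorem Preconnected.forall_apply_eq_or_forall_apply_ne (hG : G.Preconnected) {c : V → Bool}
    (hc : ∀ ⦃x y⦄, G.Adj x y → c x ≠ c y) (φ : G ≃g G) :
    (∀ x, c (φ x) = c x) ∨ ∀ x, c (φ x) ≠ c x := by
  have hconst := hG.apply_eq_of_forall_adj (f := fun x => c (φ x) == c x) fun x y hxy => by
    have h₁ := hc hxy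
    have h₂ := hc (φ.map_adj_iff.mpr hxy)
    revert h₁ h₂
    cases c x <;> cases c y <;> cases c (φ x) <;> cases c (φ y) <;> simp
  by_contra! h
  obtain ⟨⟨x, hx⟩, ⟨y, hy⟩⟩ := h
  simpa [hx, hy] using hconst x y

theorem Iso.ncard_neighborSet_apply (φ : G ≃g G') (v : V) :
    (G'.neighborSet (φ v)).ncard = (G.neighborSet v).ncard := by
  simp only [← Nat.card_coe_set_eq]
  exact (Nat.card_congr (φ.mapNeighborSet v)).symm

theorem Copy.adj_iff_of_ncard_neighborSet_le [Finite W] (f : G.Copy G')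
    (hdeg : ∀ v, (G'.neighborSet (f v)).ncard ≤ (G.neighborSet v).ncard) {v w : V} :
    G'.Adj (f v) (f w) ↔ G.Adj v w := by
  refine ⟨fun h => ?_, f.toHom.map_adj⟩
  have hf : Injective f := f.injective
  have himage : f '' G.neighborSet v = G'.neighborSet (f v) :=
    Set.eq_of_subset_of_ncard_le (Set.image_subset_iff.mpr fun w hw => f.toHom.map_adj hw)
      (by rw [Set.ncard_image_of_injective _ hf]; exact hdeg v)
  rw [← mem_neighborSet, ← himage] at h
  exact hf.mem_set_image.mp h

theorem ncard_neighborSet_cycleGraph {n : ℕ} (hn : 3 ≤ n) (v : Fin n) :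
    ((cycleGraph n).neighborSet v).ncard = 2 := by
  obtain ⟨m, rfl⟩ : ∃ m, n = m + 3 := ⟨n - 3, by omega⟩
  rw [Set.ncard_eq_toFinset_card', Set.toFinset_card, card_neighborSet_eq_degree,
    cycleGraph_degree_three_le]

theorem Walk.IsCycle.isHamiltonianCycle_of_forall_mem_support [DecidableEq V] {v : V}
    {p : G.Walk v v} (hp : p.IsCycle) (hsupp : ∀ w, w ∈ p.support) : p.IsHamiltonianCycle := by
  refine ⟨hp, hp.isPath_tail.isHamiltonian_of_mem fun w => ?_⟩
  have hw := hsupp w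
  rw [← Walk.cons_support_tail hp.not_nil, List.mem_cons] at hw
  rcases hw with rfl | hw
  exacts [p.tail.end_mem_support, hw]

theorem Connected.nonempty_iso_cycleGraph [Fintype V] (hG : G.Connected)
    (hdeg : ∀ v, (G.neighborSet v).ncard = 2) : Nonempty (G ≃g cycleGraph (Fintype.card V)) := by
  classical
  obtain ⟨v⟩ := hG.nonempty
  have hcycles : G.IsCycles := fun w _ => hdeg w
  obtain ⟨p, hp, hverts⟩ :=
    hcycles.exists_cycle_toSubgraph_verts_eq_connectedComponentSupp (c := G.connectedComponentMk v)
      rfl (Set.nonempty_of_ncard_ne_zero (by simp [hdeg]))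
  have hham : p.IsHamiltonianCycle := hp.isHamiltonianCycle_of_forall_mem_support fun w => by
    rw [← Walk.mem_verts_toSubgraph, hverts, ConnectedComponent.mem_supp_iff,
      ConnectedComponent.eq]
    exact hG w v
  have hcard : 3 ≤ Fintype.card V := hham.length_eq ▸ hp.three_le_length
  obtain ⟨f⟩ := (cycleGraph_isContained_iff hcard).mpr ⟨v, p, hp, hham.length_eq⟩
  have hbij : Bijective f := f.injective.bijective_of_nat_card_le (by simp)
  refine ⟨(⟨Equiv.ofBijective f hbij, f.adj_iff_of_ncard_neighborSet_le fun w => ?_⟩ :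
    cycleGraph _ ≃g G).symm⟩
  rw [hdeg, ncard_neighborSet_cycleGraph hcard]

end

section subdivisionGraph

variable (G : SimpleGraph V)

@[simp]
theorem subdivisionGraph_adj_inl_inl (v w : V) :
    ¬(subdivisionGraph G).Adj (.inl v) (.inl w) := by
  simp [subdivisionGraph]

@[simp]
theorem subdivisionGraph_adj_inr_inr (e f : G.edgeSet) :
    ¬(subdivisionGraph G).Adj (.inr e) (.inr f) := by
  simp [subdivisionGraph]

@[simp]
theorem subdivisionGraph_adj_inl_inr (v : V) (e : G.edgeSet) :
    (subdivisionGraph G).Adj (.inl v) (.inr e) ↔ v ∈ (e : Sym2 V) := by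
  simp [subdivisionGraph]

@[simp]
theorem subdivisionGraph_adj_inr_inl (e : G.edgeSet) (v : V) :
    (subdivisionGraph G).Adj (.inr e) (.inl v) ↔ v ∈ (e : Sym2 V) := by
  rw [adj_comm, subdivisionGraph_adj_inl_inr]

theorem subdivisionGraph_isLeft_ne_of_adj ⦃x y : V ⊕ G.edgeSet⦄
    (h : (subdivisionGraph G).Adj x y) : x.isLeft ≠ y.isLeft := by
  cases x <;> cases y <;> simp_all

theorem Reachable.subdivisionGraph_inl {u w : V} (h : G.Reachable u w) :
    (subdivisionGraph G).Reachable (.inl u) (.inl w) := by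
  obtain ⟨p⟩ := h
  induction p with
  | nil => rfl
  | @cons a b _ hab _ ih =>
    let e : G.edgeSet := ⟨s(a, b), hab⟩
    have ha : (subdivisionGraph G).Adj (.inl a) (.inr e) := by simp [e]
    have hb : (subdivisionGraph G).Adj (.inr e) (.inl b) := by simp [e]
    exact ha.reachable.trans (hb.reachable.trans ih)

theorem subdivisionGraph_connected (hG : G.Connected) : (subdivisionGraph G).Connected := by
  obtain ⟨v⟩ := hG.nonempty
  refine (connected_iff_exists_forall_reachable _).mpr ⟨.inl v, ?_⟩
  rintro (w | e)
  · exact (hG v w).subdivisionGraph_inl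
  · have hw : (subdivisionGraph G).Adj (.inl (e : Sym2 V).out.1) (.inr e) := by
      simpa using (e : Sym2 V).out_fst_mem
    exact (hG v _).subdivisionGraph_inl.trans hw.reachable

theorem ncard_neighborSet_subdivisionGraph_inr (e : G.edgeSet) :
    ((subdivisionGraph G).neighborSet (.inr e)).ncard = 2 := by
  obtain ⟨⟨a, b⟩, he⟩ := e
  have hset : (subdivisionGraph G).neighborSet (.inr ⟨s(a, b), he⟩) = {.inl a, .inl b} := by
    ext (w | f) <;> simp
  rw [hset, Set.ncard_pair (by simpa using (G.mem_edgeSet.mp he).ne)]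

theorem ncard_neighborSet_subdivisionGraph_inl (v : V) :
    ((subdivisionGraph G).neighborSet (.inl v)).ncard = (G.neighborSet v).ncard := by
  classical
  have hset : (subdivisionGraph G).neighborSet (.inl v) =
      Sum.inr '' (Subtype.val ⁻¹' G.incidenceSet v) := by
    ext (w | e) <;> simp [incidenceSet]
  rw [hset, Set.ncard_image_of_injective _ Sum.inr_injective,
    Set.ncard_preimage_of_injective_subset_range Subtype.val_injective
      (fun e he => ⟨⟨e, he.1⟩, rfl⟩)]
  simp only [← Nat.card_coe_set_eq]
  exact Nat.card_congr (G.incidenceSetEquivNeighborSet v)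

end subdivisionGraph

end SimpleGraph

theorem Equiv.image_range_inl_inr_eq {α β : Type*} (φ : α ⊕ β ≃ α ⊕ β)
    (h : ∀ x, (φ x).isLeft = x.isLeft) :
    φ '' Set.range Sum.inl = Set.range Sum.inl ∧ φ '' Set.range Sum.inr = Set.range Sum.inr := by
  have hsymm : ∀ x, (φ.symm x).isLeft = x.isLeft := fun x => by
    simpa using (h (φ.symm x)).symm
  simp only [Set.range_inl, Set.range_inr, Set.ext_iff, Set.mem_image_equiv, Set.mem_ofPred_eq,
    ← Sum.not_isLeft, hsymm, implies_true, and_self]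

/-- If `H` is a finite simple connected graph not isomorphic to any
cycle, then every automorphism of `S(H)` maps original vertices to original vertices and
subdivision vertices to subdivision vertices. -/
theorem subdivision_aut_preserves_parts
    {V : Type*} [Fintype V] (H : SimpleGraph V) (hconn : H.Connected)
    (hcyc : ∀ m : ℕ, IsEmpty (H ≃g cycleGraph m))
    (φ : subdivisionGraph H ≃g subdivisionGraph H) :
    (⇑φ '' (Set.range (Sum.inl : V → V ⊕ H.edgeSet)) = Set.range Sum.inl) ∧
    (⇑φ '' (Set.range (Sum.inr : H.edgeSet → V ⊕ H.edgeSet)) = Set.range Sum.inr) := by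
  rcases (subdivisionGraph_connected H hconn).preconnected.forall_apply_eq_or_forall_apply_ne
    (subdivisionGraph_isLeft_ne_of_adj H) φ with hφ | hφ
  · exact φ.toEquiv.image_range_inl_inr_eq hφ
  · have hreg : ∀ v, (H.neighborSet v).ncard = 2 := fun v => by
      obtain ⟨e, he⟩ : ∃ e, φ (.inl v) = .inr e := by
        simpa [← Sum.isRight_iff] using hφ (.inl v)
      rw [← ncard_neighborSet_subdivisionGraph_inl, ← φ.ncard_neighborSet_apply, he,
        ncard_neighborSet_subdivisionGraph_inr]
    exact (hcyc _).elim (hconn.nonempty_iso_cycleGraph hreg).some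
end
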